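/- If two tri-separations of a 3-connected graph cross so that two opposite corner-separators have size three, then all four links have the same size ℓ for some ℓ ∈ {0,1}. -/

import Mathlib

/-
Write `ℓ_X` for the size of the link for `X` and `z` for the size of the centre. The links
for `C` and `D`, the centre and the separator edges of `(A,B)` inside `C ∩ D` are disjoint parts of
the separator of `(A,B)`, so `ℓ_C + ℓ_D + z ≤ 3`, and likewise `ℓ_A + ℓ_B + z ≤ 3`. A
corner-separator is covered by its two links and the centre, so the two given corner-separators
give `ℓ_A + ℓ_C + z ≥ 3` and `ℓ_B + ℓ_D + z ≥ 3`. Hence all four are equalities: `ℓ_A = ℓ_D`,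
`ℓ_B = ℓ_C`, and neither separation has a separator edge with both ends in the other separator.

It remains to exclude `ℓ_A < ℓ_C` (the case `ℓ_B < ℓ_D` is symmetric). If the corner
`(A \ B) ∩ (D \ C)` is nonempty, the corner separation at it is a mixed separation of order at most
`2 ℓ_A + z < 3`, contradicting 3-connectivity. If that corner is empty, then `ℓ_A ≥ 1` (otherwise
`A ⊆ C` and `D ⊆ B`), so `ℓ_A = ℓ_D = 1` and `z = 0`. A vertex `v` in the link for `D` would then
be all of that link, and its at least two neighbours in `A` would inject into the link for `A`,
which has one element. So the link for `D` has no vertex, by symmetry neither has the link for `A`,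
and the separations are nested after all. Finally `2 ℓ + z = 3` forces `ℓ ≤ 1`.
-/

namespace Paper

open SimpleGraph

variable {V : Type*} [Fintype V] [DecidableEq V]

/-- A graph is `k`-connected if it has more than `k` vertices and deleting
fewer than `k` vertices never disconnects it. -/
def KConnected {W : Type*} (k : ℕ) (H : SimpleGraph W) : Prop :=
  k < Nat.card W ∧ ∀ S : Set W, S.ncard < k → (H.induce Sᶜ).Connected

/-- A mixed-separation of `G`: `A ∪ B = V(G)` and both `A \ B` and `B \ A` are nonempty. -/
def MixedSep (G : SimpleGraph V) (A B : Set V) : Prop :=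
  A ∪ B = Set.univ ∧ (A \ B).Nonempty ∧ (B \ A).Nonempty

/-- The edges of the separator of `(A,B)`: the edges between `A \ B` and `B \ A`. -/
def sepEdges (G : SimpleGraph V) (A B : Set V) : Set (Sym2 V) :=
  {e | e ∈ G.edgeSet ∧ ∃ x ∈ A \ B, ∃ y ∈ B \ A, e = s(x, y)}

/-- The separator of `(A,B)`: the vertices of `A ∩ B` together with the
edges between `A \ B` and `B \ A`, viewed as a set in `V ⊕ Sym2 V`. -/
def sepSet (G : SimpleGraph V) (A B : Set V) : Set (V ⊕ Sym2 V) :=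
  (Sum.inl '' (A ∩ B)) ∪ (Sum.inr '' sepEdges G A B)

/-- The order of a mixed-separation: the size of its separator. -/
noncomputable def sepOrder (G : SimpleGraph V) (A B : Set V) : ℕ :=
  (sepSet G A B).ncard

/-- A mixed `k`-separation. -/
def MixedKSep (G : SimpleGraph V) (k : ℕ) (A B : Set V) : Prop :=
  MixedSep G A B ∧ sepOrder G A B = k

/-- A tri-separation: a mixed 3-separation such that every vertex of `A ∩ B`
has at least two neighbours in both `G[A]` and `G[B]`. -/
def TriSep (G : SimpleGraph V) (A B : Set V) : Prop :=
  MixedKSep G 3 A B ∧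
    ∀ v ∈ A ∩ B, 2 ≤ (G.neighborSet v ∩ A).ncard ∧ 2 ≤ (G.neighborSet v ∩ B).ncard

/-- Two mixed-separations are nested if, after possibly swapping the names of
the sides of either one, `A ⊆ C` and `B ⊇ D`. -/
def Nested (A B C D : Set V) : Prop :=
  (A ⊆ C ∧ D ⊆ B) ∨ (A ⊆ D ∧ C ⊆ B) ∨ (B ⊆ C ∧ D ⊆ A) ∨ (B ⊆ D ∧ C ⊆ A)

/-- The induced subgraph `G[A]` contains a cycle. -/
def HasCycleIn (G : SimpleGraph V) (A : Set V) : Prop :=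
  ∃ (u : V) (p : G.Walk u u), p.IsCycle ∧ ∀ x ∈ p.support, x ∈ A

/-- A mixed 3-separation is nontrivial if both sides induce a subgraph containing a cycle. -/
def NontrivialSep (G : SimpleGraph V) (A B : Set V) : Prop :=
  HasCycleIn G A ∧ HasCycleIn G B

/-- A mixed-separation is strong if every vertex in its separator has degree at least 4. -/
def StrongSep (G : SimpleGraph V) (A B : Set V) : Prop :=
  ∀ v ∈ A ∩ B, 4 ≤ (G.neighborSet v).ncard

/-- A tri-separation is totally nested if it is nested with every tri-separation of `G`. -/
def TotallyNested (G : SimpleGraph V) (A B : Set V) : Prop :=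
  ∀ C D : Set V, TriSep G C D → Nested A B C D

/-- A trivial tri-separation: its sides are the sides `{v}` and `V \ {v}` of an
atomic cut at a degree-3 vertex `v`. -/
def TrivialSep (G : SimpleGraph V) (A B : Set V) : Prop :=
  ∃ v : V, (G.neighborSet v).ncard = 3 ∧
    ((A = {v} ∧ B = {v}ᶜ) ∨ (B = {v} ∧ A = {v}ᶜ))

/-- Diagonal edges of the crossing-diagram of `(A,B)` and `(C,D)`:
edges whose endvertices lie in opposite corners. -/
def diagEdges (G : SimpleGraph V) (A B C D : Set V) : Set (Sym2 V) :=
  {e | e ∈ G.edgeSet ∧ ∃ x y, e = s(x, y) ∧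
    ((x ∈ (A \ B) ∩ (C \ D) ∧ y ∈ (B \ A) ∩ (D \ C)) ∨
     (x ∈ (A \ B) ∩ (D \ C) ∧ y ∈ (B \ A) ∩ (C \ D)))}

/-- The centre of the crossing-diagram: `A ∩ B ∩ C ∩ D` together with the diagonal edges. -/
def centre (G : SimpleGraph V) (A B C D : Set V) : Set (V ⊕ Sym2 V) :=
  (Sum.inl '' (A ∩ B ∩ C ∩ D)) ∪ (Sum.inr '' diagEdges G A B C D)

/-- The link for the side `C` in the crossing-diagram of `(A,B)` and `(C,D)`:
the vertices `(A ∩ B) \ D` together with the non-diagonal edges of the separator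
of `(A,B)` having an endvertex in a corner for `C`. -/
def link (G : SimpleGraph V) (A B C D : Set V) : Set (V ⊕ Sym2 V) :=
  (Sum.inl '' ((A ∩ B) \ D)) ∪
    (Sum.inr '' {e | e ∈ sepEdges G A B ∧ e ∉ diagEdges G A B C D ∧ ∃ x ∈ e, x ∈ C \ D})

/-- The corner-separator at the corner for `{A,C}`: the union of the links for `A`
and for `C` together with the centre, minus the diagonal edges without an
endvertex in the corner for `{A,C}`. -/
def cornerSep (G : SimpleGraph V) (A B C D : Set V) : Set (V ⊕ Sym2 V) :=
  link G C D A B ∪ link G A B C D ∪ (Sum.inl '' (A ∩ B ∩ C ∩ D)) ∪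
    (Sum.inr '' {e | e ∈ diagEdges G A B C D ∧ ∃ x ∈ e, x ∈ (A \ B) ∩ (C \ D)})

/-- Jumping edges: edges joining vertices of two opposite links. -/
def jumpEdges (G : SimpleGraph V) (A B C D : Set V) : Set (Sym2 V) :=
  {e | e ∈ G.edgeSet ∧ ∃ x y, e = s(x, y) ∧
    ((x ∈ (A ∩ B) \ D ∧ y ∈ (A ∩ B) \ C) ∨ (x ∈ (C ∩ D) \ B ∧ y ∈ (C ∩ D) \ A))}

/-- A 2-separation: a separation of order two with no edges in its separator. -/
def TwoSep (G : SimpleGraph V) (A B : Set V) : Prop :=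
  A ∪ B = Set.univ ∧ (A \ B).Nonempty ∧ (B \ A).Nonempty ∧
    (A ∩ B).ncard = 2 ∧ sepEdges G A B = ∅

/-- `K` is (the vertex set of) a connected component of `G - S`. -/
def IsCompOf (G : SimpleGraph V) (S K : Set V) : Prop :=
  ∃ c : (G.induce Sᶜ).ConnectedComponent, K = Subtype.val '' c.supp

def sepEdgesWithin (G : SimpleGraph V) (A B S : Set V) : Set (Sym2 V) :=
  {e | e ∈ sepEdges G A B ∧ ∀ x ∈ e, x ∈ S}

section

omit [Fintype V] [DecidableEq V]
variable {G : SimpleGraph V} {A B C D : Set V}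

@[simp]
lemma mk_mem_sepEdges_iff {x y : V} :
    s(x, y) ∈ sepEdges G A B ↔ G.Adj x y ∧ (x ∈ A \ B ∧ y ∈ B \ A ∨ y ∈ A \ B ∧ x ∈ B \ A) := by
  simp only [sepEdges, Set.mem_ofPred_eq, mem_edgeSet, Sym2.eq_iff]
  grind

lemma sepEdges_comm : sepEdges G A B = sepEdges G B A := by
  ext e
  induction e using Sym2.ind
  simp only [mk_mem_sepEdges_iff]
  tauto

lemma sepEdgesWithin_comm {S : Set V} : sepEdgesWithin G A B S = sepEdgesWithin G B A S := by
  rw [sepEdgesWithin, sepEdgesWithin, sepEdges_comm]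

lemma diagEdges_eq_inter : diagEdges G A B C D = sepEdges G A B ∩ sepEdges G C D := by
  ext e
  induction e using Sym2.ind
  simp only [diagEdges, Set.mem_ofPred_eq, mem_edgeSet, Set.mem_inter_iff, mk_mem_sepEdges_iff,
    Sym2.eq_iff, or_and_right, exists_or, exists_and_left, and_assoc]
  grind

lemma sepOrder_comm : sepOrder G A B = sepOrder G B A := by
  rw [sepOrder, sepOrder, sepSet, sepSet, Set.inter_comm, sepEdges_comm]

lemma TriSep.symm (h : TriSep G A B) : TriSep G B A := by
  obtain ⟨⟨⟨hu, hAB, hBA⟩, hord⟩, hdeg⟩ := h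
  exact ⟨⟨⟨Set.union_comm A B ▸ hu, hBA, hAB⟩, sepOrder_comm.symm.trans hord⟩,
    fun v hv => (hdeg v (Set.inter_comm B A ▸ hv)).symm⟩

@[simp]
lemma inl_mem_link_iff {v : V} : Sum.inl v ∈ link G A B C D ↔ v ∈ (A ∩ B) \ D := by
  simp [link]

@[simp]
lemma inr_mem_link_iff {e : Sym2 V} : Sum.inr e ∈ link G A B C D ↔
    e ∈ sepEdges G A B ∧ e ∉ sepEdges G C D ∧ ∃ x ∈ e, x ∈ C \ D := by
  simp [link, diagEdges_eq_inter]
  tauto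

@[simp]
lemma inl_mem_centre_iff {v : V} : Sum.inl v ∈ centre G A B C D ↔ v ∈ A ∩ B ∩ C ∩ D := by
  simp [centre]

@[simp]
lemma inr_mem_centre_iff {e : Sym2 V} :
    Sum.inr e ∈ centre G A B C D ↔ e ∈ sepEdges G A B ∧ e ∈ sepEdges G C D := by
  simp [centre, diagEdges_eq_inter]

lemma link_comm : link G A B C D = link G B A C D := by
  ext (v | e)
  · simp only [inl_mem_link_iff, Set.inter_comm A B]
  · simp only [inr_mem_link_iff, sepEdges_comm (A := A) (B := B)]

lemma centre_comm_left : centre G A B C D = centre G B A C D := by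
  ext (v | e)
  · simp only [inl_mem_centre_iff, Set.mem_inter_iff]; tauto
  · simp only [inr_mem_centre_iff, sepEdges_comm (A := A) (B := B)]

lemma centre_comm_right : centre G A B C D = centre G A B D C := by
  ext (v | e)
  · simp only [inl_mem_centre_iff, Set.mem_inter_iff]; tauto
  · simp only [inr_mem_centre_iff, sepEdges_comm (A := C) (B := D)]

lemma centre_swap : centre G A B C D = centre G C D A B := by
  ext (v | e)
  · simp only [inl_mem_centre_iff, Set.mem_inter_iff]; tauto
  · simp only [inr_mem_centre_iff, and_comm]

lemma cornerSep_subset_links_union_centre :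
    cornerSep G A B C D ⊆ link G C D A B ∪ link G A B C D ∪ centre G A B C D := by
  rintro _ (((h | h) | ⟨v, hv, rfl⟩) | ⟨e, ⟨he, -⟩, rfl⟩)
  exacts [.inl (.inl h), .inl (.inr h), .inr (.inl ⟨v, hv, rfl⟩), .inr (.inr ⟨e, he, rfl⟩)]

lemma mixedSep_inter_union (hAB : A ∪ B = Set.univ) (hCD : C ∪ D = Set.univ)
    (hcorner : ((A \ B) ∩ (C \ D)).Nonempty) (hBA : (B \ A).Nonempty) :
    MixedSep G (A ∩ C) (B ∪ D) := by
  refine ⟨Set.eq_univ_of_forall fun x => ?_, ?_, ?_⟩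
  · have hx : x ∈ A ∨ x ∈ B := Set.eq_univ_iff_forall.1 hAB x
    have hx' : x ∈ C ∨ x ∈ D := Set.eq_univ_iff_forall.1 hCD x
    simp only [Set.mem_union, Set.mem_inter_iff]
    tauto
  · obtain ⟨x, ⟨hxA, hxB⟩, hxC, hxD⟩ := hcorner
    exact ⟨x, ⟨hxA, hxC⟩, fun h => h.elim hxB hxD⟩
  · obtain ⟨b, hbB, hbA⟩ := hBA
    exact ⟨b, .inl hbB, fun h => hbA h.1⟩

lemma sepSet_inter_union_subset_cornerSep (hAB : A ∪ B = Set.univ) (hCD : C ∪ D = Set.univ) :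
    sepSet G (A ∩ C) (B ∪ D) ⊆ cornerSep G A B C D := by
  have hA x : x ∈ A ∨ x ∈ B := Set.eq_univ_iff_forall.1 hAB x
  have hC x : x ∈ C ∨ x ∈ D := Set.eq_univ_iff_forall.1 hCD x
  simp only [Set.subset_def, Sum.forall, Sym2.forall]
  refine ⟨fun v => ?_, fun x y => ?_⟩
  · simp [sepSet, cornerSep]
    grind
  · have := hA x; have := hA y; have := hC x; have := hC y
    simp [sepSet, cornerSep, diagEdges_eq_inter]
    grind

lemma subset_of_corner_eq_empty (hCD : C ∪ D = Set.univ) (hcorner : (A \ B) ∩ (D \ C) = ∅)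
    (hlink : (A ∩ B) \ C = ∅) : A ⊆ C := by
  intro a ha
  by_contra haC
  have haD : a ∈ D := (Set.eq_univ_iff_forall.1 hCD a).resolve_left haC
  by_cases haB : a ∈ B
  · exact hlink.subset ⟨⟨ha, haB⟩, haC⟩
  · exact hcorner.subset ⟨⟨ha, haB⟩, haD, haC⟩

variable [Finite V]

lemma sepOrder_eq : sepOrder G A B = (A ∩ B).ncard + (sepEdges G A B).ncard := by
  rw [sepOrder, sepSet, Set.ncard_union_eq (Set.disjoint_left.2 (by simp)),
    Set.ncard_image_of_injective _ Sum.inl_injective,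
    Set.ncard_image_of_injective _ Sum.inr_injective]

lemma mk_mem_sepEdges_of_sepOrder_lt (h3 : KConnected 3 G) (hAB : A ∪ B = Set.univ)
    (hord : sepOrder G A B < 3) {a b : V} (ha : a ∈ A \ B) (hb : b ∈ B \ A) :
    s(a, b) ∈ sepEdges G A B := by
  by_contra hab
  have hother : ∀ e ∈ sepEdges G A B, ∃ z ∈ e, z ≠ a ∧ z ≠ b := by
    rintro _ ⟨hxy, x, hx, y, hy, rfl⟩
    by_cases hxa : x = a
    · subst hxa
      refine ⟨y, Sym2.mem_mk_right x y, fun h => hy.2 (h ▸ ha.1), fun h => hab ?_⟩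
      subst h
      exact ⟨hxy, x, hx, y, hy, rfl⟩
    · exact ⟨x, Sym2.mem_mk_left x y, hxa, fun h => hb.2 (h ▸ hx.1)⟩
  have : Nonempty V := ⟨a⟩
  choose! f hf using hother
  -- deleting `A ∩ B` and one endvertex `f e ∉ {a, b}` of each separator edge leaves `a` and `b`
  set T := A ∩ B ∪ f '' sepEdges G A B
  have hT : T.ncard < 3 := by
    rw [sepOrder_eq] at hord
    calc T.ncard ≤ (A ∩ B).ncard + (f '' sepEdges G A B).ncard := Set.ncard_union_le _ _
      _ ≤ (A ∩ B).ncard + (sepEdges G A B).ncard := by grw [Set.ncard_image_le]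
      _ < 3 := hord
  have haT : a ∉ T := by
    rintro (h | ⟨e, he, hfe⟩)
    exacts [ha.2 h.2, (hf e he).2.1 hfe]
  have hbT : b ∉ T := by
    rintro (h | ⟨e, he, hfe⟩)
    exacts [hb.2 h.1, (hf e he).2.2 hfe]
  obtain ⟨p⟩ := (h3.2 T hT).preconnected ⟨a, haT⟩ ⟨b, hbT⟩
  obtain ⟨⟨⟨⟨x, hxT⟩, ⟨y, hyT⟩⟩, hxy⟩, -, hx, hy⟩ :=
    p.exists_boundary_dart {z | z.1 ∈ A \ B} ha (fun h => hb.2 h.1)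
  have hyB : y ∈ B := (Set.eq_univ_iff_forall.1 hAB y).elim
    (fun h => by_contra fun h' => hy ⟨h, h'⟩) id
  have he : s(x, y) ∈ sepEdges G A B := ⟨hxy, x, hx, y, ⟨hyB, fun h => hyT (.inl ⟨h, hyB⟩)⟩, rfl⟩
  rcases Sym2.mem_iff.1 (hf _ he).1 with hfe | hfe
  · exact hxT (.inr ⟨_, he, hfe⟩)
  · exact hyT (.inr ⟨_, he, hfe⟩)

lemma three_le_sepOrder (h3 : KConnected 3 G) (h : MixedSep G A B) : 3 ≤ sepOrder G A B := by
  obtain ⟨hAB, hA, hB⟩ := h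
  by_contra! hord
  have hprod : ((A \ B) ×ˢ (B \ A)).ncard ≤ (sepEdges G A B).ncard := by
    refine Set.ncard_le_ncard_of_injOn (fun ab => s(ab.1, ab.2))
      (fun ab hab => mk_mem_sepEdges_of_sepOrder_lt h3 hAB hord hab.1 hab.2) ?_
    rintro ⟨a, b⟩ ⟨ha, hb⟩ ⟨a', b'⟩ ⟨ha', hb'⟩ h
    rcases Sym2.eq_iff.1 h with ⟨rfl, rfl⟩ | ⟨rfl, rfl⟩
    · rfl
    · exact (hb'.2 ha.1).elim
  have hcard : 3 < (A \ B).ncard + (A ∩ B).ncard + (B \ A).ncard := by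
    have := h3.1
    rw [← Set.ncard_univ, ← hAB] at this
    have h1 := Set.ncard_union_add_ncard_inter A B
    have h2 := Set.ncard_inter_add_ncard_sdiff_eq_ncard A B
    have h3 := Set.ncard_inter_add_ncard_sdiff_eq_ncard B A
    rw [Set.inter_comm B A] at h3
    omega
  rw [Set.ncard_prod] at hprod
  rw [sepOrder_eq] at hord
  have := (Set.ncard_pos).2 hA
  have := (Set.ncard_pos).2 hB
  nlinarith

lemma ncard_links_add_ncard_centre_le_sepOrder (hCD : C ∪ D = Set.univ) :
    (link G A B C D).ncard + (link G A B D C).ncard + (centre G A B C D).ncard +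
      (sepEdgesWithin G A B (C ∩ D)).ncard ≤ sepOrder G A B := by
  have hC x : x ∈ C ∨ x ∈ D := Set.eq_univ_iff_forall.1 hCD x
  have : Disjoint (link G A B C D) (link G A B D C) ∧
      Disjoint (link G A B C D ∪ link G A B D C) (centre G A B C D) ∧
      Disjoint (link G A B C D ∪ link G A B D C ∪ centre G A B C D)
        (Sum.inr '' sepEdgesWithin G A B (C ∩ D)) ∧
      link G A B C D ∪ link G A B D C ∪ centre G A B C D ∪
        Sum.inr '' sepEdgesWithin G A B (C ∩ D) ⊆ sepSet G A B := by
    simp only [Set.disjoint_left, Set.subset_def, Sum.forall, Sym2.forall]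
    refine ⟨⟨fun v => ?_, fun x y => ?_⟩, ⟨fun v => ?_, fun x y => ?_⟩,
      ⟨fun v => ?_, fun x y => ?_⟩, ⟨fun v => ?_, fun x y => ?_⟩⟩
    all_goals simp [sepSet, sepEdgesWithin]
    all_goals grind
  obtain ⟨h1, h2, h3, hsub⟩ := this
  rw [← Set.ncard_image_of_injective (sepEdgesWithin G A B (C ∩ D)) Sum.inr_injective,
    ← Set.ncard_union_eq h1, ← Set.ncard_union_eq h2, ← Set.ncard_union_eq h3]
  exact Set.ncard_le_ncard hsub

lemma ncard_cornerSep_le : (cornerSep G A B C D).ncard ≤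
    (link G C D A B).ncard + (link G A B C D).ncard + (centre G A B C D).ncard :=
  (Set.ncard_le_ncard cornerSep_subset_links_union_centre).trans <|
    (Set.ncard_union_le _ _).trans (by grw [Set.ncard_union_le])

lemma ncard_sdiff_le_ncard_link : ((A ∩ B) \ D).ncard ≤ (link G A B C D).ncard := by
  rw [← Set.ncard_image_of_injective _ Sum.inl_injective]
  exact Set.ncard_le_ncard Set.subset_union_left

lemma ncard_inter_le_ncard_centre : (A ∩ B ∩ C ∩ D).ncard ≤ (centre G A B C D).ncard := by
  rw [← Set.ncard_image_of_injective _ Sum.inl_injective]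
  exact Set.ncard_le_ncard Set.subset_union_left

lemma corner_eq_empty_of_lt_three (h3 : KConnected 3 G) (hAB : MixedSep G A B)
    (hCD : C ∪ D = Set.univ)
    (hsmall : (link G C D A B).ncard + (link G A B D C).ncard + (centre G A B C D).ncard < 3) :
    (A \ B) ∩ (D \ C) = ∅ := by
  by_contra hne
  have hmix := mixedSep_inter_union (G := G) hAB.1 (Set.union_comm C D ▸ hCD)
    (Set.nonempty_iff_ne_empty.2 hne) hAB.2.2
  have hord := (three_le_sepOrder h3 hmix).trans
    (Set.ncard_le_ncard (sepSet_inter_union_subset_cornerSep hAB.1 (Set.union_comm C D ▸ hCD)))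
  have hcorner := ncard_cornerSep_le (G := G) (A := A) (B := B) (C := D) (D := C)
  rw [← link_comm, ← centre_comm_right] at hcorner
  omega

lemma ncard_neighborSet_inter_le_link (hCD : C ∪ D = Set.univ) (hcorner : (A \ B) ∩ (D \ C) = ∅)
    (hcentre : A ∩ B ∩ C ∩ D = ∅) (hwithin : sepEdgesWithin G C D (A ∩ B) = ∅) {v : V}
    (hv : (A ∩ B) \ C = {v}) :
    (G.neighborSet v ∩ A).ncard ≤ (link G C D A B).ncard := by
  classical
  have hvAB : v ∈ (A ∩ B) \ C := hv.symm ▸ rfl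
  have hvD : v ∈ D := (Set.eq_univ_iff_forall.1 hCD v).resolve_left hvAB.2
  -- a neighbour in `C ∩ D` is a vertex of the link, any other one spans a link edge with `v`
  refine Set.ncard_le_ncard_of_injOn (fun u => if u ∈ C ∩ D then .inl u else .inr s(v, u)) ?_ ?_
  · rintro u ⟨hvu, huA⟩
    split_ifs with hu
    · exact inl_mem_link_iff.2 ⟨hu, fun huB => hcentre.subset ⟨⟨⟨huA, huB⟩, hu.1⟩, hu.2⟩⟩
    have huC : u ∈ C := by
      by_contra huC
      have huD : u ∈ D := (Set.eq_univ_iff_forall.1 hCD u).resolve_left huC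
      by_cases huB : u ∈ B
      · exact G.loopless.irrefl v ((hv.subset ⟨⟨huA, huB⟩, huC⟩ : u = v) ▸ hvu)
      · exact hcorner.subset ⟨⟨huA, huB⟩, huD, huC⟩
    have huD : u ∉ D := fun huD => hu ⟨huC, huD⟩
    have hsepCD : s(v, u) ∈ sepEdges G C D :=
      mk_mem_sepEdges_iff.2 ⟨hvu, .inr ⟨⟨huC, huD⟩, hvD, hvAB.2⟩⟩
    have huB : u ∉ B := fun huB => hwithin.subset
      ⟨hsepCD, by simpa [Sym2.mem_iff] using ⟨hvAB.1, huA, huB⟩⟩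
    refine inr_mem_link_iff.2 ⟨hsepCD, ?_, u, Sym2.mem_mk_right v u, huA, huB⟩
    simp [hvAB.1.1, hvAB.1.2]
  · intro u _ u' _ h
    dsimp only at h
    split_ifs at h
    · exact Sum.inl.inj h
    · exact Sym2.congr_right.1 (Sum.inr.inj h)

lemma sdiff_eq_empty_of_ncard_link_le_one (hCD : C ∪ D = Set.univ)
    (hdeg : ∀ v ∈ A ∩ B, 2 ≤ (G.neighborSet v ∩ A).ncard) (hcorner : (A \ B) ∩ (D \ C) = ∅)
    (hcentre : A ∩ B ∩ C ∩ D = ∅) (hwithin : sepEdgesWithin G C D (A ∩ B) = ∅)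
    (hLA : (link G C D A B).ncard ≤ 1) (hLD : (link G A B D C).ncard ≤ 1) :
    (A ∩ B) \ C = ∅ := by
  by_contra hne
  obtain ⟨v, hv⟩ := Set.nonempty_iff_ne_empty.2 hne
  have hsingle : (A ∩ B) \ C = {v} :=
    (Set.ncard_le_one_iff_subsingleton.1 (ncard_sdiff_le_ncard_link.trans hLD)).eq_singleton_of_mem
      hv
  have := hdeg v hv.1
  have := ncard_neighborSet_inter_le_link hCD hcorner hcentre hwithin hsingle
  omega

lemma subset_and_subset_of_corner_eq_empty (hAB : TriSep G A B) (hCD : TriSep G C D)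
    (hcorner : (A \ B) ∩ (D \ C) = ∅) (hLAD : (link G C D A B).ncard = (link G A B D C).ncard)
    (hsum : (link G C D A B).ncard + (link G A B C D).ncard + (centre G A B C D).ncard = 3)
    (hlt : (link G C D A B).ncard < (link G A B C D).ncard)
    (hwAB : sepEdgesWithin G A B (C ∩ D) = ∅) (hwCD : sepEdgesWithin G C D (A ∩ B) = ∅) :
    A ⊆ C ∧ D ⊆ B := by
  obtain ⟨⟨⟨hABu, -, -⟩, -⟩, hdegAB⟩ := hAB
  obtain ⟨⟨⟨hCDu, -, -⟩, -⟩, hdegCD⟩ := hCD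
  have hBAu : B ∪ A = Set.univ := Set.union_comm A B ▸ hABu
  have hcorner' : (D \ C) ∩ (A \ B) = ∅ := Set.inter_comm (A \ B) _ ▸ hcorner
  have hLA := ncard_sdiff_le_ncard_link (G := G) (A := D) (B := C) (C := A) (D := B)
  have hLD := ncard_sdiff_le_ncard_link (G := G) (A := A) (B := B) (C := D) (D := C)
  rw [← link_comm] at hLA
  suffices (A ∩ B) \ C = ∅ ∧ (D ∩ C) \ B = ∅ from
    ⟨subset_of_corner_eq_empty hCDu hcorner this.1, subset_of_corner_eq_empty hBAu hcorner' this.2⟩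
  rcases Nat.eq_zero_or_pos (link G C D A B).ncard with h0 | hpos
  · exact ⟨(Set.ncard_eq_zero).1 (by omega), (Set.ncard_eq_zero).1 (by omega)⟩
  have hcentre : A ∩ B ∩ C ∩ D = ∅ := (Set.ncard_eq_zero).1 <| by
    have := ncard_inter_le_ncard_centre (G := G) (A := A) (B := B) (C := C) (D := D)
    omega
  refine ⟨sdiff_eq_empty_of_ncard_link_le_one hCDu (fun v hv => (hdegAB v hv).1) hcorner hcentre
    hwCD (by omega) (by omega), sdiff_eq_empty_of_ncard_link_le_one hBAu
    (fun v hv => (hdegCD v (Set.inter_comm D C ▸ hv)).2) hcorner' ?_ ?_ ?_ ?_⟩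
  · rw [← hcentre]; ext; simp only [Set.mem_inter_iff]; tauto
  · rw [← sepEdgesWithin_comm, Set.inter_comm]; exact hwAB
  · rw [← link_comm]; omega
  · rw [← link_comm]; omega

lemma ncard_link_le_of_not_subset (h3 : KConnected 3 G) (hAB : TriSep G A B) (hCD : TriSep G C D)
    (hN : ¬ (A ⊆ C ∧ D ⊆ B)) (hLAD : (link G C D A B).ncard = (link G A B D C).ncard)
    (hsum : (link G C D A B).ncard + (link G A B C D).ncard + (centre G A B C D).ncard = 3)
    (hwAB : sepEdgesWithin G A B (C ∩ D) = ∅) (hwCD : sepEdgesWithin G C D (A ∩ B) = ∅) :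
    (link G A B C D).ncard ≤ (link G C D A B).ncard := by
  by_contra! hlt
  have hcorner := corner_eq_empty_of_lt_three h3 hAB.1.1 hCD.1.1.1 (by omega)
  exact hN (subset_and_subset_of_corner_eq_empty hAB hCD hcorner hLAD hsum hlt hwAB hwCD)

lemma ncard_links_eq_of_ncard_cornerSep_eq_three (h3 : KConnected 3 G) (hAB : TriSep G A B)
    (hCD : TriSep G C D) (hcross : ¬ Nested A B C D) (hAC : (cornerSep G A B C D).ncard = 3)
    (hBD : (cornerSep G B A D C).ncard = 3) :
    ∃ ℓ ∈ ({0, 1} : Set ℕ),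
      (link G C D A B).ncard = ℓ ∧ (link G C D B A).ncard = ℓ ∧
      (link G A B C D).ncard = ℓ ∧ (link G A B D C).ncard = ℓ := by
  have hsepAB := ncard_links_add_ncard_centre_le_sepOrder (G := G) (A := A) (B := B) hCD.1.1.1
  have hsepCD := ncard_links_add_ncard_centre_le_sepOrder (G := G) (A := C) (B := D) hAB.1.1.1
  have hcornerAC := ncard_cornerSep_le (G := G) (A := A) (B := B) (C := C) (D := D)
  have hcornerBD := ncard_cornerSep_le (G := G) (A := B) (B := A) (C := D) (D := C)
  rw [hAB.1.2] at hsepAB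
  rw [hCD.1.2, ← centre_swap] at hsepCD
  rw [← link_comm (A := C) (B := D), ← link_comm (A := A) (B := B),
    ← centre_comm_left (A := A) (B := B), ← centre_comm_right (A := A) (B := B)] at hcornerBD
  have hwAB : sepEdgesWithin G A B (C ∩ D) = ∅ := (Set.ncard_eq_zero).1 (by omega)
  have hwCD : sepEdgesWithin G C D (A ∩ B) = ∅ := (Set.ncard_eq_zero).1 (by omega)
  have hCA := ncard_link_le_of_not_subset h3 hAB hCD (fun h => hcross (.inl h)) (by omega)
    (by omega) hwAB hwCD
  have hDB := ncard_link_le_of_not_subset h3 hAB.symm hCD.symm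
    (fun h => hcross (.inr (.inr (.inr h)))) ?_ ?_ ?_ ?_
  · rw [← link_comm (A := C) (B := D), ← link_comm (A := A) (B := B)] at hDB
    refine ⟨(link G A B C D).ncard, ?_, by omega, by omega, rfl, by omega⟩
    simp only [Set.mem_insert_iff, Set.mem_singleton_iff]
    omega
  · rw [← link_comm (A := C) (B := D), ← link_comm (A := A) (B := B)]; omega
  · rw [← link_comm (A := C) (B := D), ← link_comm (A := A) (B := B),
      ← centre_comm_left (A := A) (B := B), ← centre_comm_right (A := A) (B := B)]
    omega
  · rw [← sepEdgesWithin_comm, Set.inter_comm]; exact hwAB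
  · rw [← sepEdgesWithin_comm, Set.inter_comm]; exact hwCD

end

/-- If two tri-separations of a 3-connected graph cross so that two
opposite corner-separators have size three, then all four links have the same
size `ℓ ∈ {0,1}`. -/
theorem stmt6 (G : SimpleGraph V) (h3 : KConnected 3 G) (A B C D : Set V)
    (hAB : TriSep G A B) (hCD : TriSep G C D)
    (hcross : ¬ Nested A B C D)
    (hopp : ((cornerSep G A B C D).ncard = 3 ∧ (cornerSep G B A D C).ncard = 3) ∨
      ((cornerSep G A B D C).ncard = 3 ∧ (cornerSep G B A C D).ncard = 3)) :
    ∃ ℓ ∈ ({0, 1} : Set ℕ),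
      (link G C D A B).ncard = ℓ ∧ (link G C D B A).ncard = ℓ ∧
      (link G A B C D).ncard = ℓ ∧ (link G A B D C).ncard = ℓ := by
  rcases hopp with ⟨hAC, hBD⟩ | ⟨hAD, hBC⟩
  · exact ncard_links_eq_of_ncard_cornerSep_eq_three h3 hAB hCD hcross hAC hBD
  · have hcross' : ¬ Nested A B D C := fun h => hcross (by unfold Nested at *; tauto)
    obtain ⟨ℓ, hℓ, hA, hB, hD, hC⟩ :=
      ncard_links_eq_of_ncard_cornerSep_eq_three h3 hAB hCD.symm hcross' hAD hBC
    rw [← link_comm] at hA hB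
    exact ⟨ℓ, hℓ, hA, hB, hC, hD⟩

end Paper
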